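/- For a quadratic form p with unique symmetric associated matrix T_p, the completely bounded norm of p equals the completely bounded norm of T_p: ‖p‖_cb = ‖T_p‖_cb. -/
import Mathlib

noncomputable section

/-- `d × d` real matrices, viewed as operators on Euclidean space (with operator norm). -/
abbrev Mat (d : ℕ) := EuclideanSpace ℝ (Fin d) →L[ℝ] EuclideanSpace ℝ (Fin d)

/-- The completely bounded norm of a matrix `M` indexed by a finite type:
`sup ‖∑_{i,j} M_{i,j} A(i) B(j)‖` over contraction-valued maps `A, B`. -/
def matCb {ι : Type} [Fintype ι] (M : Matrix ι ι ℝ) : ℝ :=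
  sSup {c : ℝ | ∃ (d : ℕ) (A B : ι → Mat d),
    (∀ i, ‖A i‖ ≤ 1) ∧ (∀ j, ‖B j‖ ≤ 1) ∧
    c = ‖∑ i : ι, ∑ j : ι, M i j • (A i * B j)‖}

lemma matCb_bddAbove {ι : Type} [Fintype ι] (M : Matrix ι ι ℝ) :
    BddAbove {c : ℝ | ∃ (d : ℕ) (A B : ι → Mat d),
      (∀ i, ‖A i‖ ≤ 1) ∧ (∀ j, ‖B j‖ ≤ 1) ∧
      c = ‖∑ i : ι, ∑ j : ι, M i j • (A i * B j)‖} := by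
  refine ⟨∑ i, ∑ j, |M i j|, ?_⟩
  rintro c ⟨d, A, B, hA, hB, rfl⟩
  refine (norm_sum_le _ _).trans ?_
  refine Finset.sum_le_sum fun i _ => (norm_sum_le _ _).trans ?_
  refine Finset.sum_le_sum fun j _ => ?_
  have h0 := norm_smul (M i j) (A i * B j)
  rw [Real.norm_eq_abs] at h0
  rw [h0]
  have h1 : ‖A i * B j‖ ≤ 1 := by
    calc ‖A i * B j‖ ≤ ‖A i‖ * ‖B j‖ := norm_mul_le _ _
      _ ≤ 1 := mul_le_one₀ (hA i) (norm_nonneg _) (hB j)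
  nlinarith [abs_nonneg (M i j), norm_nonneg (A i * B j)]

lemma matCb_nonemptySet {ι : Type} [Fintype ι] (M : Matrix ι ι ℝ) :
    (0:ℝ) ∈ {c : ℝ | ∃ (d : ℕ) (A B : ι → Mat d),
      (∀ i, ‖A i‖ ≤ 1) ∧ (∀ j, ‖B j‖ ≤ 1) ∧
      c = ‖∑ i : ι, ∑ j : ι, M i j • (A i * B j)‖} := by
  refine ⟨1, fun _ => 0, fun _ => 0, fun i => by rw [norm_zero]; norm_num,
    fun j => by rw [norm_zero]; norm_num, ?_⟩
  simp

open ContinuousLinearMap in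
/-- Key step: if `T + Tᵀ = 2 Tp` entrywise, then `matCb Tp ≤ matCb T`. -/
lemma matCb_sym_le {n : ℕ} (T Tp : Matrix (Fin n) (Fin n) ℝ)
    (h2 : ∀ i j, T i j + T j i = 2 * Tp i j) : matCb Tp ≤ matCb T := by
  refine csSup_le ⟨0, matCb_nonemptySet Tp⟩ ?_
  rintro c ⟨d, A, B, hA, hB, rfl⟩
  set X : Mat d := ∑ i, ∑ j, T i j • (A i * B j) with hX
  set Y : Mat d := ∑ i, ∑ j, T j i • (A i * B j) with hY
  have hXY : ∑ i, ∑ j, Tp i j • (A i * B j) = (2⁻¹:ℝ) • (X + Y) := by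
    rw [hX, hY, ← Finset.sum_add_distrib, Finset.smul_sum]
    refine Finset.sum_congr rfl fun i _ => ?_
    rw [← Finset.sum_add_distrib, Finset.smul_sum]
    refine Finset.sum_congr rfl fun j _ => ?_
    have h3 := add_smul (T i j) (T j i) (A i * B j)
    have h4 := smul_smul (2⁻¹:ℝ) (T i j + T j i) (A i * B j)
    rw [← h3, h4]
    congr 1
    rw [h2 i j]
    ring
  have hXle : ‖X‖ ≤ matCb T :=
    le_csSup (matCb_bddAbove T) ⟨d, A, B, hA, hB, rfl⟩
  have hterm : ∀ (i j : Fin n), adjoint (T j i • (A i * B j))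
      = T j i • (adjoint (B j) * adjoint (A i)) := by
    intro i j
    have hs : adjoint (T j i • (A i * B j)) = T j i • adjoint (A i * B j) := by
      simp [map_smulₛₗ]
    rw [hs]
    exact congrArg (fun Z => T j i • Z) (adjoint_comp (A i) (B j))
  have hYadj : adjoint Y = ∑ i, ∑ j, T i j • (adjoint (B i) * adjoint (A j)) := by
    rw [hY, map_sum]
    simp only [map_sum, hterm]
    exact Finset.sum_comm
  have hYle : ‖Y‖ ≤ matCb T := by
    have hn : ‖Y‖ = ‖adjoint Y‖ := (LinearIsometryEquiv.norm_map adjoint Y).symm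
    rw [hn, hYadj]
    refine le_csSup (matCb_bddAbove T) ⟨d, fun i => adjoint (B i), fun j => adjoint (A j),
      fun i => by rw [LinearIsometryEquiv.norm_map]; exact hB i,
      fun j => by rw [LinearIsometryEquiv.norm_map]; exact hA j, rfl⟩
  rw [hXY]
  have := norm_smul (2⁻¹:ℝ) (X + Y)
  rw [this, Real.norm_eq_abs]
  calc |2⁻¹| * ‖X + Y‖ ≤ 2⁻¹ * (‖X‖ + ‖Y‖) := by
        rw [abs_of_pos (by norm_num : (0:ℝ) < 2⁻¹)]
        exact mul_le_mul_of_nonneg_left (norm_add_le X Y) (by norm_num)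
    _ ≤ matCb T := by linarith

/-- Evaluating a quadratic form at `e_i + e_j`. -/
lemma quad_single_add {n : ℕ} (S : Matrix (Fin n) (Fin n) ℝ) (i j : Fin n) :
    ∑ a, ∑ b, S a b * (Pi.single i 1 + Pi.single j 1 : Fin n → ℝ) a
      * (Pi.single i 1 + Pi.single j 1 : Fin n → ℝ) b
    = S i i + S i j + S j i + S j j := by
  simp only [Pi.add_apply, Pi.single_apply, mul_add, add_mul, mul_ite, ite_mul,
    mul_one, mul_zero, zero_mul, one_mul, Finset.sum_add_distrib,
    Finset.sum_ite_eq, Finset.sum_ite_eq', Finset.mem_univ, if_true]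
  ring

/-- Evaluating a quadratic form at `e_i`. -/
lemma quad_single {n : ℕ} (S : Matrix (Fin n) (Fin n) ℝ) (i : Fin n) :
    ∑ a, ∑ b, S a b * (Pi.single i 1 : Fin n → ℝ) a * (Pi.single i 1 : Fin n → ℝ) b
    = S i i := by
  simp only [Pi.single_apply, mul_ite, ite_mul, mul_one, mul_zero, zero_mul, one_mul,
    Finset.sum_ite_eq, Finset.sum_ite_eq', Finset.mem_univ, if_true]

/-- For a quadratic form with unique symmetric associated matrix `T_p`, the completely
bounded norm of the form (the infimum of `‖T‖_cb` over representing matrices `T`)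
equals `‖T_p‖_cb`. -/
theorem cb_norm_quadratic_form (n : ℕ) (Tp : Matrix (Fin n) (Fin n) ℝ)
    (hsym : Tp.IsSymm) :
    sInf {c : ℝ | ∃ T : Matrix (Fin n) (Fin n) ℝ,
        (∀ x : Fin n → ℝ, ∑ i, ∑ j, T i j * x i * x j = ∑ i, ∑ j, Tp i j * x i * x j) ∧
        c = matCb T} =
    matCb Tp := by
  have hmem : matCb Tp ∈ {c : ℝ | ∃ T : Matrix (Fin n) (Fin n) ℝ,
      (∀ x : Fin n → ℝ, ∑ i, ∑ j, T i j * x i * x j = ∑ i, ∑ j, Tp i j * x i * x j) ∧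
      c = matCb T} := ⟨Tp, fun _ => rfl, rfl⟩
  have hlb : ∀ c ∈ {c : ℝ | ∃ T : Matrix (Fin n) (Fin n) ℝ,
      (∀ x : Fin n → ℝ, ∑ i, ∑ j, T i j * x i * x j = ∑ i, ∑ j, Tp i j * x i * x j) ∧
      c = matCb T}, matCb Tp ≤ c := by
    rintro c ⟨T, hT, rfl⟩
    refine matCb_sym_le T Tp fun i j => ?_
    have hii := hT (Pi.single i 1)
    have hjj := hT (Pi.single j 1)
    have hij := hT (Pi.single i 1 + Pi.single j 1)
    rw [quad_single_add, quad_single_add] at hij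
    rw [quad_single, quad_single] at hii
    rw [quad_single, quad_single] at hjj
    have hs : Tp j i = Tp i j := hsym.apply i j
    linarith
  exact le_antisymm (csInf_le ⟨matCb Tp, hlb⟩ hmem) (le_csInf ⟨matCb Tp, hmem⟩ hlb)
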